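/- Assume 2 is invertible in D and ⟨·,·⟩_V is nondegenerate (so adjoints are unique when they exist). Let w : V → V' be a bijective D-linear map admitting a bijective adjoint w^⋆, and set Γ := w^⋆∘w. For X ∈ End_D(V) admitting an adjoint X^*, define dα(X) := (1/2)·(w∘X∘w⁻¹ − (w^⋆)⁻¹∘X^*∘w^⋆) ∈ End_D(V'). Let Γ_i ∈ End_D(V) be skew-adjoint (its adjoint is −Γ_i) and commute with Γ, and set Γ'_i := w∘Γ_i∘w⁻¹. Then dα intertwines the adjoint actions of Γ_i and Γ'_i: for every X ∈ End_D(V) with adjoint X^*, the commutator [Γ_i, X] := Γ_i∘X − X∘Γ_i has adjoint [Γ_i, X^*], and dα([Γ_i, X]) = Γ'_i∘dα(X) − dα(X)∘Γ'_i. -/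

import Mathlib

/-!
Adjoints reverse products, so the skew-adjointness of `Γi` gives `[Γi, X]^* = [Γi, X^*]`.
Conjugation by `w` and by `(w^⋆)⁻¹` are ring isomorphisms `End V → End V'`; they agree on `Γi`
because `Γi` commutes with `Γ = w^⋆ w`. Hence both halves of `2 dα([Γi, X])` are brackets with
the same `Γ'i`, and halving is harmless since `2` is invertible.
-/

/-- An `ε`-Hermitian form on a right `D`-module `V` (encoded as a left `Dᵐᵒᵖ`-module). -/
def IsHermitianForm {D : Type*} [DivisionRing D] (τ : D → D) (ε : D)
    {V : Type*} [AddCommGroup V] [Module Dᵐᵒᵖ V] (inn : V → V → D) : Prop :=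
  (∀ v₁ v₂ u, inn (v₁ + v₂) u = inn v₁ u + inn v₂ u) ∧
  (∀ v u₁ u₂, inn v (u₁ + u₂) = inn v u₁ + inn v u₂) ∧
  (∀ (a : D) (v u : V), inn (MulOpposite.op a • v) u = τ a * inn v u) ∧
  (∀ (a : D) (v u : V), inn v (MulOpposite.op a • u) = inn v u * a) ∧
  (∀ v u, inn u v = ε * τ (inn v u))

section FormAdjoint

variable {R V A : Type*} [Semiring R] [AddCommGroup V] [Module R V]

def IsFormAdjoint (inn : V → V → A) (X Xs : Module.End R V) : Prop :=
  ∀ v u, inn (X v) u = inn v (Xs u)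

variable {inn : V → V → A} {X Xs Y Ys : Module.End R V}

theorem IsFormAdjoint.mul (hX : IsFormAdjoint inn X Xs) (hY : IsFormAdjoint inn Y Ys) :
    IsFormAdjoint inn (X * Y) (Ys * Xs) := fun v u => (hX (Y v) u).trans (hY v (Xs u))

theorem IsFormAdjoint.sub [AddCommGroup A]
    (hl : ∀ v₁ v₂ u, inn (v₁ + v₂) u = inn v₁ u + inn v₂ u)
    (hr : ∀ v u₁ u₂, inn v (u₁ + u₂) = inn v u₁ + inn v u₂)
    (hX : IsFormAdjoint inn X Xs) (hY : IsFormAdjoint inn Y Ys) :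
    IsFormAdjoint inn (X - Y) (Xs - Ys) := fun v u => by
  have hl' := map_sub (AddMonoidHom.mk' (inn · u) (hl · · u)) (X v) (Y v)
  have hr' := map_sub (AddMonoidHom.mk' (inn v) (hr v)) (Xs u) (Ys u)
  simp only [AddMonoidHom.mk'_apply] at hl' hr'
  rw [LinearMap.sub_apply, LinearMap.sub_apply, hl', hr', hX, hY]

theorem IsFormAdjoint.lie [AddCommGroup A]
    (hl : ∀ v₁ v₂ u, inn (v₁ + v₂) u = inn v₁ u + inn v₂ u)
    (hr : ∀ v u₁ u₂, inn v (u₁ + u₂) = inn v u₁ + inn v u₂)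
    {Γ : Module.End R V} (hΓ : IsFormAdjoint inn Γ (-Γ)) (hX : IsFormAdjoint inn X Xs) :
    IsFormAdjoint inn ⁅Γ, X⁆ ⁅Γ, Xs⁆ := by
  have h := (hΓ.mul hX).sub hl hr (hX.mul hΓ)
  rwa [mul_neg, neg_mul, sub_neg_eq_add, add_comm, ← sub_eq_add_neg, ← Ring.lie_def,
    ← Ring.lie_def] at h

end FormAdjoint

section EndomorphismRing

variable {R M N : Type*} [Semiring R] [AddCommGroup M] [AddCommGroup N] [Module R M] [Module R N]

theorem LinearMap.add_self_injective (h2 : IsUnit (2 : R)) :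
    Function.Injective fun f : M →ₗ[R] N => f + f := fun f g hfg => by
  ext v
  have hv := congr($hfg v)
  simp only [LinearMap.add_apply, ← two_smul R] at hv
  exact h2.smul_left_cancel.mp hv

theorem LinearEquiv.conjRingEquiv_lie (e : M ≃ₗ[R] N) (A B : Module.End R M) :
    e.conjRingEquiv ⁅A, B⁆ = ⁅e.conjRingEquiv A, e.conjRingEquiv B⁆ := by
  simp only [Ring.lie_def, map_sub, map_mul]

theorem LinearEquiv.conjRingEquiv_symm_eq_of_commute (w : M ≃ₗ[R] N) (ws : N ≃ₗ[R] M)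
    {Γ : Module.End R M} (hΓ : Commute Γ (ws.toLinearMap ∘ₗ w.toLinearMap)) :
    ws.symm.conjRingEquiv Γ = w.conjRingEquiv Γ := by
  ext v'
  have h := congr($hΓ (w.symm v'))
  simp only [Module.End.mul_apply, LinearMap.comp_apply, LinearEquiv.coe_coe,
    LinearEquiv.apply_symm_apply] at h
  simp [h]

theorem LinearEquiv.conjRingEquiv_lie_sub_conjRingEquiv_lie (e₁ e₂ : M ≃ₗ[R] N)
    {Γ : Module.End R M} (hΓ : e₁.conjRingEquiv Γ = e₂.conjRingEquiv Γ)
    (X Xs : Module.End R M) :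
    e₁.conjRingEquiv ⁅Γ, X⁆ - e₂.conjRingEquiv ⁅Γ, Xs⁆
      = ⁅e₁.conjRingEquiv Γ, e₁.conjRingEquiv X - e₂.conjRingEquiv Xs⁆ := by
  rw [e₁.conjRingEquiv_lie, e₂.conjRingEquiv_lie, ← hΓ]
  simp only [Ring.lie_def, mul_sub, sub_mul]
  abel

end EndomorphismRing

/- `dα(X)` enters only through `dαX + dαX = w∘X∘w⁻¹ − (w^⋆)⁻¹∘X^*∘w^⋆`, which determines it
since `2` is invertible. -/
theorem stmt7_general
    (D : Type*) [DivisionRing D]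
    (τ : D → D)
    (ε : D)
    (h2 : IsUnit (2 : D))
    (V V' : Type*) [AddCommGroup V] [AddCommGroup V']
    [Module Dᵐᵒᵖ V] [Module Dᵐᵒᵖ V']
    (innV : V → V → D)
    (hV : IsHermitianForm τ ε innV)
    -- `w` is a bijective `D`-linear map with bijective adjoint `wstar`; `Γ := wstar ∘ w`
    (w : V ≃ₗ[Dᵐᵒᵖ] V') (wstar : V' ≃ₗ[Dᵐᵒᵖ] V)
    -- `Γi` is skew-adjoint (its adjoint is `-Γi`) and commutes with `Γ`; `Γ'i := w∘Γi∘w⁻¹`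
    (Γi : V →ₗ[Dᵐᵒᵖ] V)
    (hΓiskew : ∀ (v u : V), innV (Γi v) u = innV v ((-Γi) u))
    (hΓicomm : Γi ∘ₗ (wstar.toLinearMap ∘ₗ w.toLinearMap)
        = (wstar.toLinearMap ∘ₗ w.toLinearMap) ∘ₗ Γi)
    (X Xstar : V →ₗ[Dᵐᵒᵖ] V)
    (hX : ∀ (v u : V), innV (X v) u = innV v (Xstar u))
    -- `dαX = dα(X)` and `dαY = dα([Γi, X])`
    (dαX dαY : V' →ₗ[Dᵐᵒᵖ] V')
    (hdαX : dαX + dαX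
        = w.toLinearMap ∘ₗ X ∘ₗ w.symm.toLinearMap
          - wstar.symm.toLinearMap ∘ₗ Xstar ∘ₗ wstar.toLinearMap)
    (hdαY : dαY + dαY
        = w.toLinearMap ∘ₗ (Γi ∘ₗ X - X ∘ₗ Γi) ∘ₗ w.symm.toLinearMap
          - wstar.symm.toLinearMap ∘ₗ (Γi ∘ₗ Xstar - Xstar ∘ₗ Γi) ∘ₗ wstar.toLinearMap) :
    -- `[Γi, X]` has adjoint `[Γi, Xstar]`
    (∀ (v u : V), innV ((Γi ∘ₗ X - X ∘ₗ Γi) v) u = innV v ((Γi ∘ₗ Xstar - Xstar ∘ₗ Γi) u)) ∧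
    -- `dα([Γi, X]) = Γ'i ∘ dα(X) − dα(X) ∘ Γ'i`
    dαY = (w.toLinearMap ∘ₗ Γi ∘ₗ w.symm.toLinearMap) ∘ₗ dαX
        - dαX ∘ₗ (w.toLinearMap ∘ₗ Γi ∘ₗ w.symm.toLinearMap) := by
  refine ⟨IsFormAdjoint.lie hV.1 hV.2.1 hΓiskew hX, ?_⟩
  have hΓ' := w.conjRingEquiv_symm_eq_of_commute wstar hΓicomm
  have hdαX' : dαX + dαX = w.conjRingEquiv X - wstar.symm.conjRingEquiv Xstar := hdαX
  have hdαY' :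
      dαY + dαY = w.conjRingEquiv ⁅Γi, X⁆ - wstar.symm.conjRingEquiv ⁅Γi, Xstar⁆ := hdαY
  show dαY = ⁅w.conjRingEquiv Γi, dαX⁆
  apply LinearMap.add_self_injective (R := Dᵐᵒᵖ) (by simpa using h2.op)
  beta_reduce
  rw [hdαY', w.conjRingEquiv_lie_sub_conjRingEquiv_lie _ hΓ'.symm, ← hdαX']
  simp only [Ring.lie_def, mul_add, add_mul]
  abel

theorem stmt7
    (D : Type*) [DivisionRing D]
    (τ : D → D)
    (hτadd : ∀ a b, τ (a + b) = τ a + τ b)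
    (hτmul : ∀ a b, τ (a * b) = τ b * τ a)
    (hτinv : ∀ a, τ (τ a) = a)
    (ε : D) (hε : ε = 1 ∨ ε = -1)
    (h2 : IsUnit (2 : D))
    (V V' : Type*) [AddCommGroup V] [AddCommGroup V']
    [Module Dᵐᵒᵖ V] [Module Dᵐᵒᵖ V']
    (innV : V → V → D) (innV' : V' → V' → D)
    (hV : IsHermitianForm τ ε innV)
    (hV' : IsHermitianForm τ (-ε) innV')
    (hnd : ∀ v : V, (∀ u : V, innV v u = 0) → v = 0)
    -- `w` is a bijective `D`-linear map with bijective adjoint `wstar`; `Γ := wstar ∘ w`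
    (w : V ≃ₗ[Dᵐᵒᵖ] V') (wstar : V' ≃ₗ[Dᵐᵒᵖ] V)
    (hadj : ∀ (v : V) (v' : V'), innV' (w v) v' = innV v (wstar v'))
    -- `Γi` is skew-adjoint (its adjoint is `-Γi`) and commutes with `Γ`; `Γ'i := w∘Γi∘w⁻¹`
    (Γi : V →ₗ[Dᵐᵒᵖ] V)
    (hΓiskew : ∀ (v u : V), innV (Γi v) u = innV v ((-Γi) u))
    (hΓicomm : Γi ∘ₗ (wstar.toLinearMap ∘ₗ w.toLinearMap)
        = (wstar.toLinearMap ∘ₗ w.toLinearMap) ∘ₗ Γi)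
    (X Xstar : V →ₗ[Dᵐᵒᵖ] V)
    (hX : ∀ (v u : V), innV (X v) u = innV v (Xstar u))
    -- `dαX = dα(X)` and `dαY = dα([Γi, X])`
    (dαX dαY : V' →ₗ[Dᵐᵒᵖ] V')
    (hdαX : dαX + dαX
        = w.toLinearMap ∘ₗ X ∘ₗ w.symm.toLinearMap
          - wstar.symm.toLinearMap ∘ₗ Xstar ∘ₗ wstar.toLinearMap)
    (hdαY : dαY + dαY
        = w.toLinearMap ∘ₗ (Γi ∘ₗ X - X ∘ₗ Γi) ∘ₗ w.symm.toLinearMap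
          - wstar.symm.toLinearMap ∘ₗ (Γi ∘ₗ Xstar - Xstar ∘ₗ Γi) ∘ₗ wstar.toLinearMap) :
    -- `[Γi, X]` has adjoint `[Γi, Xstar]`
    (∀ (v u : V), innV ((Γi ∘ₗ X - X ∘ₗ Γi) v) u = innV v ((Γi ∘ₗ Xstar - Xstar ∘ₗ Γi) u)) ∧
    -- `dα([Γi, X]) = Γ'i ∘ dα(X) − dα(X) ∘ Γ'i`
    dαY = (w.toLinearMap ∘ₗ Γi ∘ₗ w.symm.toLinearMap) ∘ₗ dαX
        - dαX ∘ₗ (w.toLinearMap ∘ₗ Γi ∘ₗ w.symm.toLinearMap) :=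
  stmt7_general D τ ε h2 V V' innV hV w wstar Γi hΓiskew hΓicomm X Xstar hX dαX dαY hdαX hdαY
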